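/- arXiv:2408.03300 — 5 statements merged into one kernel-verified Lean document; each statement's English description precedes it below -/
import Mathlib

section
/- The topological space (R, τ_a) is T0 if and only if for all x, y ∈ R with x ≠ y, either x ≠ y*a^n for all n ≥ 1, or y ≠ x*a^n for all n ≥ 1. -/
open Set

variable {R : Type*}

/-- The element absorb topology `τ_a`: a set `I` is open iff `I·a ⊆ I`. -/
def elemTop [Ring R] (a : R) : TopologicalSpace R where
  IsOpen I := ∀ x ∈ I, x * a ∈ I
  isOpen_univ := fun _ _ => trivial
  isOpen_inter := fun _ _ hs ht x hx => ⟨hs x hx.1, ht x hx.2⟩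
  isOpen_sUnion := fun S hS x hx => by
    obtain ⟨t, ht, hxt⟩ := hx
    exact ⟨t, ht, hS t ht x hxt⟩

/-- The orbit `O(x) = {x * a^n : n ∈ ℕ}`. -/
def orbit' [Ring R] (a x : R) : Set R := {y | ∃ n : ℕ, y = x * a ^ n}

theorem stmt_8 [Ring R] (a : R) :
    @T0Space R (elemTop a) ↔
      ∀ x y : R, x ≠ y →
        (∀ n : ℕ, 1 ≤ n → x ≠ y * a ^ n) ∨ (∀ n : ℕ, 1 ≤ n → y ≠ x * a ^ n) := by
  have hmem : ∀ (U : Set R), (∀ x ∈ U, x * a ∈ U) → ∀ x ∈ U, ∀ n : ℕ, x * a ^ n ∈ U := by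
    intro U hU x hx n
    induction n with
    | zero => simpa using hx
    | succ n ih =>
      have := hU _ ih
      rwa [mul_assoc, ← pow_succ] at this
  rw [@t0Space_iff_exists_isOpen_xor'_mem R (elemTop a)]
  constructor
  · intro h x y hxy
    by_contra hc
    push_neg at hc
    obtain ⟨⟨n, hn, hxn⟩, ⟨m, hm, hym⟩⟩ := hc
    obtain ⟨U, hU, hxor⟩ := h hxy
    rcases hxor with ⟨hx, hy⟩ | ⟨hy, hx⟩
    · exact hy (hym ▸ hmem U hU x hx m)
    · exact hx (hxn ▸ hmem U hU y hy n)
  · intro h x y hxy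
    rcases h x y hxy with hL | hR
    · refine ⟨orbit' a y, ?_, Or.inr ⟨⟨0, by simp⟩, ?_⟩⟩
      · rintro z ⟨n, rfl⟩
        exact ⟨n + 1, by rw [mul_assoc, ← pow_succ]⟩
      · rintro ⟨n, hn⟩
        rcases Nat.eq_zero_or_pos n with rfl | hpos
        · exact hxy (by simpa using hn)
        · exact hL n hpos hn
    · refine ⟨orbit' a x, ?_, Or.inl ⟨⟨0, by simp⟩, ?_⟩⟩
      · rintro z ⟨n, rfl⟩
        exact ⟨n + 1, by rw [mul_assoc, ← pow_succ]⟩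
      · rintro ⟨n, hn⟩
        rcases Nat.eq_zero_or_pos n with rfl | hpos
        · exact hxy.symm (by simpa using hn)
        · exact hR n hpos hn
end

section
/- The topological space (R, τ_a) is T1 if and only if for all x, y ∈ R with x ≠ y, one has x ≠ y*a^n and y ≠ x*a^n for all n ≥ 1. -/
open Set

variable {R : Type*}

theorem stmt_9 [Ring R] (a : R) :
    @T1Space R (elemTop a) ↔
      ∀ x y : R, x ≠ y → ∀ n : ℕ, 1 ≤ n → x ≠ y * a ^ n ∧ y ≠ x * a ^ n := by
  letI := elemTop a
  constructor
  · intro h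
    have hcl : ∀ x y : R, y ≠ x → y * a ≠ x := by
      intro x y hyx heq
      have hc : IsClosed ({x} : Set R) := isClosed_singleton
      have ho : IsOpen ({x}ᶜ : Set R) := hc.isOpen_compl
      exact (ho y hyx) (by simpa using heq)
    have key : ∀ x y : R, y ≠ x → ∀ n : ℕ, x ≠ y * a ^ (n + 1) := by
      intro x y hyx n
      induction n generalizing y with
      | zero =>
        intro hx
        exact hcl x y hyx (by simpa [pow_one] using hx.symm)
      | succ n ih =>
        intro hx
        by_cases hz : y * a = x
        · exact hcl x y hyx hz
        · exact ih (y * a) hz (by rw [hx, pow_succ', ← mul_assoc])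
    intro x y hxy n hn
    obtain ⟨m, rfl⟩ := Nat.exists_eq_add_of_le hn
    rw [Nat.add_comm]
    exact ⟨key x y hxy.symm m, key y x hxy m⟩
  · intro h
    refine ⟨fun x => ?_⟩
    rw [← isOpen_compl_iff]
    intro y hy
    simp only [Set.mem_compl_iff, Set.mem_singleton_iff] at hy ⊢
    intro heq
    exact (h x y (Ne.symm hy) 1 le_rfl).1 (by simpa [pow_one] using heq.symm)
end

section
/- The topological space (R, τ_a) is Hausdorff (T2) if and only if for all x, y ∈ R with x ≠ y, one has x*a^n ≠ y*a^m for all m, n ≥ 0. -/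
open Set

variable {R : Type*}

lemma absorb_pow [Ring R] (a : R) {U : Set R} (hU : ∀ x ∈ U, x * a ∈ U)
    {x : R} (hx : x ∈ U) : ∀ n : ℕ, x * a ^ n ∈ U := by
  intro n
  induction n with
  | zero => simpa using hx
  | succ n ih =>
    have := hU _ ih
    rwa [mul_assoc, ← pow_succ] at this

theorem stmt_10 [Ring R] (a : R) :
    @T2Space R (elemTop a) ↔
      ∀ x y : R, x ≠ y → ∀ m n : ℕ, x * a ^ n ≠ y * a ^ m := by
  letI := elemTop a
  constructor
  · intro h x y hxy m n heq
    obtain ⟨U, V, hU, hV, hxU, hyV, hUV⟩ := t2_separation hxy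
    have hU' : ∀ z ∈ U, z * a ∈ U := hU
    have hV' : ∀ z ∈ V, z * a ∈ V := hV
    have h1 : x * a ^ n ∈ U := absorb_pow a hU' hxU n
    have h2 : y * a ^ m ∈ V := absorb_pow a hV' hyV m
    rw [heq] at h1
    exact (Set.disjoint_left.mp hUV h1) h2
  · intro h
    constructor
    intro x y hxy
    refine ⟨orbit' a x, orbit' a y, ?_, ?_, ⟨0, by simp⟩, ⟨0, by simp⟩, ?_⟩
    · intro z hz
      obtain ⟨n, rfl⟩ := hz
      exact ⟨n + 1, by rw [mul_assoc, pow_succ]⟩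
    · intro z hz
      obtain ⟨n, rfl⟩ := hz
      exact ⟨n + 1, by rw [mul_assoc, pow_succ]⟩
    · rw [Set.disjoint_left]
      rintro z ⟨n, rfl⟩ ⟨m, hm⟩
      exact h x y hxy m n hm
end

section
/- For every x ∈ R, the closure of O(x) in (R, τ_a) is both closed and open (clopen). -/
open Set

variable {R : Type*}

theorem stmt_11 [Ring R] (a x : R) :
    @IsClopen R (elemTop a) (@closure R (elemTop a) (orbit' a x)) := by
  letI := elemTop a
  refine ⟨isClosed_closure, ?_⟩
  show ∀ y ∈ closure (orbit' a x), y * a ∈ closure (orbit' a x)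
  intro y hy
  rw [mem_closure_iff] at hy ⊢
  intro U hU hyU
  have hV : IsOpen {z : R | z * a ∈ U} := by
    intro z hz
    exact hU _ hz
  obtain ⟨z, hzU, n, hzn⟩ := hy _ hV hyU
  exact ⟨z * a, hzU, n + 1, by rw [hzn, pow_succ, mul_assoc]⟩
end

section
/- Let e ∈ R be an idempotent. The set of limit (cluster) points of R·e in (R, τ_e) equals R \ R·e, i.e., every point x with x*e ≠ x is a cluster point of R·e, and no point of R·e is a cluster point of R·e. -/
open Set

variable {R : Type*}

theorem stmt_16 [Ring R] (e : R) (he : e * e = e) :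
    ∀ x : R,
      (∀ U : Set R, @IsOpen R (elemTop e) U → x ∈ U →
        (U ∩ ({y : R | ∃ r, y = r * e} \ {x})).Nonempty) ↔
      x ∉ {y : R | ∃ r, y = r * e} := by
  intro x
  constructor
  · rintro h ⟨r, rfl⟩
    have hopen : @IsOpen R (elemTop e) ({r * e} : Set R) := by
      intro y hy
      simp only [Set.mem_singleton_iff] at hy ⊢
      rw [hy, mul_assoc, he]
    obtain ⟨y, hy1, _, hy3⟩ := h _ hopen rfl
    exact hy3 hy1
  · intro hx U hU hxU
    refine ⟨x * e, hU x hxU, ⟨x, rfl⟩, fun h => hx ?_⟩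
    exact ⟨x, h.symm⟩
end
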